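/- Let (A, C) = σ(A', C') be a simple state in an AMG and let (A₂, C₂) = σ(A, C) (so C₂ arises from C). Then T(P(C) ∩ N_∅) = T(P(C₂) ∩ N_∅), i.e., the completed descendants of checkpoints of the propagated set are unchanged by passing to the simple state. -/
import Mathlib


/-- An Attack-MTD DAG (AMG): nodes `N`, defenses `D`, an edge relation,
a root, a predicate marking subgoals (inner nodes), a refinement
(`conj g = True` means `∧`, `False` means `∨`), and for each defense the
set of nodes it defends. -/
structure AMG (N : Type) (D : Type) where
  edge : N → N → Prop
  root : N
  subgoal : N → Prop
  conj : N → Prop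
  defended : D → Set N

namespace AMG

variable {N D : Type} (T : AMG N D)

/-- One propagation step: add every subgoal whose refinement condition holds. -/
def step (M : Set N) : Set N :=
  M ∪ {g | T.subgoal g ∧
    ((T.conj g ∧ ∀ n, T.edge g n → n ∈ M) ∨ (¬ T.conj g ∧ ∃ n, T.edge g n ∧ n ∈ M))}

/-- Propagation operator: least fixed point of `step` above `C`. -/
def prop (C : Set N) : Set N := sInf {F | C ⊆ F ∧ T.step F = F}

/-- `l` is a directed path starting at the root and ending at a parent of `n`. -/
def rootPathTo (n : N) (l : List N) : Prop :=
  l.head? = some T.root ∧ List.Chain' T.edge l ∧ ∃ p, l.getLast? = some p ∧ T.edge p n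

/-- Completed descendants: nodes having at least one root-to-parent path, all of
whose root-to-parent paths meet `C`. -/
def cdesc (C : Set N) : Set N :=
  {n | (∃ l, T.rootPathTo n l) ∧ ∀ l, T.rootPathTo n l → ∃ g ∈ l, g ∈ C}

/-- Undefended nodes `N_∅`. -/
def undef : Set N := {n | ∀ d, n ∉ T.defended d}

/-- Pruning operator `R`. -/
def prune (s : Set N × Set N) : Set N × Set N :=
  (s.1 \ (T.cdesc (s.2 ∩ T.undef) ∪ s.2), s.2 \ T.cdesc (s.2 ∩ T.undef))

/-- Simple state `σ`. -/
def sstate (s : Set N × Set N) : Set N × Set N := T.prune (s.1, T.prop s.2)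

/-- Atomic attacks: the leaves of the DAG. -/
def atomic : Set N := {n | ∀ m, ¬ T.edge n m}

/-- Two states are equivalent iff they have the same simple state. -/
def stSetoid : Setoid (Set N × Set N) :=
  ⟨fun s t => T.sstate s = T.sstate t, ⟨fun _ => rfl, fun h => h.symm, fun h₁ h₂ => h₁.trans h₂⟩⟩

/-- Locations: equivalence classes of states. -/
def Loc := Quotient T.stSetoid

/-- Canonical representative of a location: the common simple state. -/
def rep (ℓ : T.Loc) : Set N × Set N :=
  Quotient.lift T.sstate (fun _ _ h => h) ℓ

/-- Set difference on locations: `ℓ \ (a, b)`. -/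
def locDiff (ℓ : T.Loc) (a b : Set N) : T.Loc :=
  Quotient.mk T.stSetoid ((T.rep ℓ).1 \ a, (T.rep ℓ).2 \ b)

/-- `d₂` follows `d₁` : `d₁ ▷ d₂`. -/
def follows (d₁ d₂ : D) : Prop :=
  ∃ n₁ ∈ T.defended d₁, ∃ n₂, T.edge n₁ n₂ ∧ n₂ ∉ T.defended d₁ ∧ n₂ ∈ T.defended d₂

end AMG

namespace AMG
variable {N D : Type} (T : AMG N D)

lemma subset_step' (M : Set N) : M ⊆ T.step M := Set.subset_union_left

lemma step_mono' {M M' : Set N} (h : M ⊆ M') : T.step M ⊆ T.step M' := by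
  intro g hg
  rcases hg with hg | ⟨hsg, hg⟩
  · exact Or.inl (h hg)
  · refine Or.inr ⟨hsg, ?_⟩
    rcases hg with ⟨hc, hall⟩ | ⟨hc, n, hn, hnM⟩
    · exact Or.inl ⟨hc, fun n hn => h (hall n hn)⟩
    · exact Or.inr ⟨hc, n, hn, h hnM⟩

lemma subset_prop' (C : Set N) : C ⊆ T.prop C :=
  le_sInf fun _ hF => hF.1

lemma prop_mono' {C C' : Set N} (h : C ⊆ C') : T.prop C ⊆ T.prop C' :=
  sInf_le_sInf fun _ hF => ⟨h.trans hF.1, hF.2⟩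

lemma step_prop' (C : Set N) : T.step (T.prop C) = T.prop C := by
  have h1 : T.step (T.prop C) ⊆ T.prop C := by
    apply le_sInf
    intro F hF
    calc T.step (T.prop C) ⊆ T.step F := T.step_mono' (sInf_le hF)
      _ = F := hF.2
  exact le_antisymm h1 (T.subset_step' _)

lemma prop_idem' {C C' : Set N} (h : C' ⊆ T.prop C) : T.prop C' ⊆ T.prop C :=
  sInf_le ⟨h, T.step_prop' C⟩

lemma cdesc_mono' {M M' : Set N} (h : M ⊆ M') : T.cdesc M ⊆ T.cdesc M' := by
  intro n hn
  refine ⟨hn.1, fun l hl => ?_⟩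
  rcases hn.2 l hl with ⟨g, hg, hgM⟩
  exact ⟨g, hg, h hgM⟩

end AMG

/-- If `(A, C) = σ (A', C')` is a simple state and `(A₂, C₂) = σ (A, C)`, then the
completed descendants of the checkpoints of the propagated set are unchanged:
`T(P(C) ∩ N_∅) = T(P(C₂) ∩ N_∅)`. -/
theorem stmt7 {N D : Type} (T : AMG N D) (A' C' A C A₂ C₂ : Set N)
    (h : (A, C) = T.sstate (A', C')) (h₂ : (A₂, C₂) = T.sstate (A, C)) :
    T.cdesc (T.prop C ∩ T.undef) = T.cdesc (T.prop C₂ ∩ T.undef) := by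
  have hC : C = T.prop C' \ T.cdesc (T.prop C' ∩ T.undef) := congrArg Prod.snd h
  have hC2 : C₂ = T.prop C \ T.cdesc (T.prop C ∩ T.undef) := congrArg Prod.snd h₂
  have hCP' : C ⊆ T.prop C' := by rw [hC]; exact Set.diff_subset
  have hPP' : T.prop C ⊆ T.prop C' := T.prop_idem' hCP'
  have hKK' : T.cdesc (T.prop C ∩ T.undef) ⊆ T.cdesc (T.prop C' ∩ T.undef) :=
    T.cdesc_mono' (Set.inter_subset_inter_left _ hPP')
  have hCC2 : C ⊆ C₂ := by
    rw [hC2]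
    intro x hx
    have hx' : x ∈ T.prop C' \ T.cdesc (T.prop C' ∩ T.undef) := by rw [← hC]; exact hx
    exact ⟨T.subset_prop' C hx, fun hK => hx'.2 (hKK' hK)⟩
  have hPeq : T.prop C₂ = T.prop C := by
    apply le_antisymm
    · refine T.prop_idem' ?_
      rw [hC2]; exact Set.diff_subset
    · exact T.prop_mono' hCC2
  rw [hPeq]
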